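/- arXiv:math/0112140 — 7 statements merged into one kernel-verified Lean document; each statement's English description precedes it below -/
import Mathlib

section
/- Let p, q be nonzero complex numbers, P the 4×4 permutation matrix swapping the two tensor factors of ℂ²⊗ℂ², and R = P·R̂ where R̂ has rows (−q,0,0,0), (0,p⁻¹−q,1,0), (0,qp⁻¹,0,0), (0,0,0,p⁻¹). Then R satisfies the quantum Yang–Baxter equation R₁₂ R₁₃ R₂₃ = R₂₃ R₁₃ R₁₂ as 8×8 matrices. -/
open Matrix Kronecker

/-- The nonstandard R̂ matrix, indexed by `Fin 2 × Fin 2` (ordered as 00,01,10,11). -/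
noncomputable def Rhat (p q : ℂ) : Matrix (Fin 2 × Fin 2) (Fin 2 × Fin 2) ℂ :=
  Matrix.of fun a b =>
    (!![-q, 0, 0, 0;
        0, p⁻¹ - q, 1, 0;
        0, q * p⁻¹, 0, 0;
        0, 0, 0, p⁻¹])
      ⟨2 * a.1.val + a.2.val, by have := a.1.isLt; have := a.2.isLt; omega⟩
      ⟨2 * b.1.val + b.2.val, by have := b.1.isLt; have := b.2.isLt; omega⟩

/-- The 4×4 permutation matrix swapping the two tensor factors of ℂ²⊗ℂ². -/
def Pflip : Matrix (Fin 2 × Fin 2) (Fin 2 × Fin 2) ℂ :=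
  Matrix.of fun a b => if a = (b.2, b.1) then 1 else 0

/-- R = P·R̂. -/
noncomputable def Rmat (p q : ℂ) : Matrix (Fin 2 × Fin 2) (Fin 2 × Fin 2) ℂ :=
  Pflip * Rhat p q

/-- R₁₂ = R ⊗ I₂, as an 8×8 matrix indexed by `Fin 2 × (Fin 2 × Fin 2)`. -/
noncomputable def R12 (p q : ℂ) :
    Matrix (Fin 2 × Fin 2 × Fin 2) (Fin 2 × Fin 2 × Fin 2) ℂ :=
  Matrix.reindex (Equiv.prodAssoc (Fin 2) (Fin 2) (Fin 2))
    (Equiv.prodAssoc (Fin 2) (Fin 2) (Fin 2))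
    (Rmat p q ⊗ₖ (1 : Matrix (Fin 2) (Fin 2) ℂ))

/-- R₂₃ = I₂ ⊗ R. -/
noncomputable def R23 (p q : ℂ) :
    Matrix (Fin 2 × Fin 2 × Fin 2) (Fin 2 × Fin 2 × Fin 2) ℂ :=
  (1 : Matrix (Fin 2) (Fin 2) ℂ) ⊗ₖ Rmat p q

/-- R₁₃ acts on the first and third tensor factors. -/
noncomputable def R13 (p q : ℂ) :
    Matrix (Fin 2 × Fin 2 × Fin 2) (Fin 2 × Fin 2 × Fin 2) ℂ :=
  Matrix.of fun a b =>
    Rmat p q (a.1, a.2.2) (b.1, b.2.2) * (if a.2.1 = b.2.1 then 1 else 0)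


/-- Cheap nested-vector form of the R matrix entries: `REv p q a₁ a₂ b₁ b₂ = R (a₁,a₂) (b₁,b₂)`. -/
noncomputable def REv (p q : ℂ) : Fin 2 → Fin 2 → Fin 2 → Fin 2 → ℂ :=
  ![![![![-q, 0], ![0, 0]], ![![0, q * p⁻¹], ![0, 0]]],
    ![![![0, p⁻¹ - q], ![1, 0]], ![![0, 0], ![0, p⁻¹]]]]

lemma Rmat_apply (p q : ℂ) (a b : Fin 2 × Fin 2) :
    Rmat p q a b = REv p q a.1 a.2 b.1 b.2 := by
  obtain ⟨a1, a2⟩ := a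
  obtain ⟨b1, b2⟩ := b
  have h : Rmat p q (a1, a2) (b1, b2) = Rhat p q (a2, a1) (b1, b2) := by
    simp only [Rmat, Matrix.mul_apply, Pflip, Matrix.of_apply]
    rw [Finset.sum_eq_single (a2, a1)]
    · simp
    · intro x _ hx
      rw [if_neg, zero_mul]
      intro h
      exact hx (by cases x; simp_all)
    · simp
  rw [h]
  fin_cases a1 <;> fin_cases a2 <;> fin_cases b1 <;> fin_cases b2 <;> rfl

set_option maxHeartbeats 4000000 in
/-- The quantum Yang–Baxter equation R₁₂ R₁₃ R₂₃ = R₂₃ R₁₃ R₁₂. -/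
theorem quantum_yang_baxter (p q : ℂ) (hp : p ≠ 0) (hq : q ≠ 0) :
    R12 p q * R13 p q * R23 p q = R23 p q * R13 p q * R12 p q := by
  ext ⟨a, b, c⟩ ⟨d, e, f⟩
  simp only [R12, R13, R23, Matrix.mul_apply, Matrix.reindex_apply, Matrix.submatrix_apply,
    Equiv.prodAssoc, Equiv.coe_fn_symm_mk, Matrix.kroneckerMap_apply, Matrix.one_apply,
    Matrix.of_apply, Rmat_apply, Fintype.sum_prod_type, Fin.sum_univ_two]
  fin_cases a <;> fin_cases b <;> fin_cases c <;> fin_cases d <;> fin_cases e <;> fin_cases f <;>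
    simp [REv] <;> ring
end

section
/- Let p, q be nonzero complex numbers, R̂ as above, and R̂' = R̂⁻¹ − (p − q⁻¹)·I₄. Then R' = P·R̂' satisfies the quantum Yang–Baxter equation R'₁₂ R'₁₃ R'₂₃ = R'₂₃ R'₁₃ R'₁₂. -/
open Matrix Kronecker

/-- R̂' = R̂⁻¹ − (p − q⁻¹)·I₄. -/
noncomputable def Rhat' (p q : ℂ) : Matrix (Fin 2 × Fin 2) (Fin 2 × Fin 2) ℂ :=
  (Rhat p q)⁻¹ - (p - q⁻¹) • (1 : Matrix (Fin 2 × Fin 2) (Fin 2 × Fin 2) ℂ)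

/-- R' = P·R̂'. -/
noncomputable def Rmat' (p q : ℂ) : Matrix (Fin 2 × Fin 2) (Fin 2 × Fin 2) ℂ :=
  Pflip * Rhat' p q

/-- R'₁₂ = R' ⊗ I₂, as an 8×8 matrix indexed by `Fin 2 × (Fin 2 × Fin 2)`. -/
noncomputable def R12' (p q : ℂ) :
    Matrix (Fin 2 × Fin 2 × Fin 2) (Fin 2 × Fin 2 × Fin 2) ℂ :=
  Matrix.reindex (Equiv.prodAssoc (Fin 2) (Fin 2) (Fin 2))
    (Equiv.prodAssoc (Fin 2) (Fin 2) (Fin 2))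
    (Rmat' p q ⊗ₖ (1 : Matrix (Fin 2) (Fin 2) ℂ))

/-- R'₂₃ = I₂ ⊗ R'. -/
noncomputable def R23' (p q : ℂ) :
    Matrix (Fin 2 × Fin 2 × Fin 2) (Fin 2 × Fin 2 × Fin 2) ℂ :=
  (1 : Matrix (Fin 2) (Fin 2) ℂ) ⊗ₖ Rmat' p q

/-- R'₁₃ acts on the first and third tensor factors. -/
noncomputable def R13' (p q : ℂ) :
    Matrix (Fin 2 × Fin 2 × Fin 2) (Fin 2 × Fin 2 × Fin 2) ℂ :=
  Matrix.of fun a b =>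
    Rmat' p q (a.1, a.2.2) (b.1, b.2.2) * (if a.2.1 = b.2.1 then 1 else 0)

/-!
The 4×4 matrix R̂ satisfies the Hecke relation (R̂ + q)(R̂ − p⁻¹) = 0, so
R̂⁻¹ = (p/q)·R̂ + (p − q⁻¹)·I₄ and hence R̂' = (p/q)·R̂. Thus R' is a scalar multiple of P·R̂, and
since the Yang–Baxter equation is homogeneous of degree three it suffices to check it for P·R̂,
which is a finite computation.
-/

theorem Matrix.inv_eq_smul_sub_of_mul_self {n K : Type*} [Fintype n] [DecidableEq n] [Field K]
    {A : Matrix n n K} {a b : K} (hA : A * A = a • A + b • 1) (hb : b ≠ 0) :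
    A⁻¹ = b⁻¹ • (A - a • 1) := by
  refine inv_eq_right_inv ?_
  rw [mul_smul_comm, mul_sub, mul_smul_comm, mul_one, hA, add_sub_cancel_left, smul_smul,
    inv_mul_cancel₀ hb, one_smul]

theorem Rhat_mul_self (p q : ℂ) :
    Rhat p q * Rhat p q = (p⁻¹ - q) • Rhat p q + (q / p) • 1 := by
  ext ⟨a1, a2⟩ ⟨b1, b2⟩
  fin_cases a1 <;> fin_cases a2 <;> fin_cases b1 <;> fin_cases b2 <;>
    simp [Rhat, Matrix.mul_apply, Fintype.sum_prod_type, Fin.sum_univ_two] <;> ring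

theorem Rhat'_eq_smul {p q : ℂ} (hp : p ≠ 0) (hq : q ≠ 0) : Rhat' p q = (p / q) • Rhat p q := by
  have hc : p / q * (p⁻¹ - q) + (p - q⁻¹) = 0 := by field_simp; ring
  rw [Rhat', Matrix.inv_eq_smul_sub_of_mul_self (Rhat_mul_self p q) (div_ne_zero hq hp), inv_div]
  linear_combination (norm := module) -(hc • (1 : Matrix (Fin 2 × Fin 2) (Fin 2 × Fin 2) ℂ))

theorem Pflip_mul (M : Matrix (Fin 2 × Fin 2) (Fin 2 × Fin 2) ℂ) :
    Pflip * M = M.submatrix Prod.swap id := by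
  ext a b
  rw [mul_apply, Fintype.sum_eq_single a.swap]
  · simp [Pflip]
  · intro c hc
    have : a ≠ (c.2, c.1) := fun h => hc (by rw [h]; rfl)
    simp [Pflip, this]

theorem Rmat'_eq_smul {p q : ℂ} (hp : p ≠ 0) (hq : q ≠ 0) :
    Rmat' p q = (p / q) • (Rhat p q).submatrix Prod.swap id := by
  rw [Rmat', Rhat'_eq_smul hp hq, mul_smul_comm, Pflip_mul]

section YangBaxter

variable {n α : Type*} [DecidableEq n] [CommSemiring α]

def leg12 (R : Matrix (n × n) (n × n) α) : Matrix (n × n × n) (n × n × n) α :=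
  reindex (Equiv.prodAssoc n n n) (Equiv.prodAssoc n n n) (R ⊗ₖ (1 : Matrix n n α))

def leg23 (R : Matrix (n × n) (n × n) α) : Matrix (n × n × n) (n × n × n) α :=
  (1 : Matrix n n α) ⊗ₖ R

def leg13 (R : Matrix (n × n) (n × n) α) : Matrix (n × n × n) (n × n × n) α :=
  of fun a b => R (a.1, a.2.2) (b.1, b.2.2) * (if a.2.1 = b.2.1 then 1 else 0)

def IsYangBaxter [Fintype n] (R : Matrix (n × n) (n × n) α) : Prop :=
  leg12 R * leg13 R * leg23 R = leg23 R * leg13 R * leg12 R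

@[simp]
theorem leg12_apply (R : Matrix (n × n) (n × n) α) (a b : n × n × n) :
    leg12 R a b = R (a.1, a.2.1) (b.1, b.2.1) * (1 : Matrix n n α) a.2.2 b.2.2 :=
  rfl

@[simp]
theorem leg23_apply (R : Matrix (n × n) (n × n) α) (a b : n × n × n) :
    leg23 R a b = (1 : Matrix n n α) a.1 b.1 * R a.2 b.2 :=
  rfl

@[simp]
theorem leg13_apply (R : Matrix (n × n) (n × n) α) (a b : n × n × n) :
    leg13 R a b = R (a.1, a.2.2) (b.1, b.2.2) * (1 : Matrix n n α) a.2.1 b.2.1 := by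
  simp [leg13, one_apply]

theorem leg12_smul (c : α) (R : Matrix (n × n) (n × n) α) : leg12 (c • R) = c • leg12 R := by
  simp [leg12, smul_kronecker, submatrix_smul]

theorem leg23_smul (c : α) (R : Matrix (n × n) (n × n) α) : leg23 (c • R) = c • leg23 R := by
  simp [leg23, kronecker_smul]

theorem leg13_smul (c : α) (R : Matrix (n × n) (n × n) α) : leg13 (c • R) = c • leg13 R := by
  ext
  simp [leg13]

theorem IsYangBaxter.smul [Fintype n] {R : Matrix (n × n) (n × n) α} (h : IsYangBaxter R)
    (c : α) : IsYangBaxter (c • R) := by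
  unfold IsYangBaxter at h ⊢
  simp only [leg12_smul, leg13_smul, leg23_smul, smul_mul_smul_comm, h]

end YangBaxter

set_option maxHeartbeats 4000000 in
theorem isYangBaxter_Rhat_submatrix_swap (p q : ℂ) :
    IsYangBaxter ((Rhat p q).submatrix Prod.swap id) := by
  unfold IsYangBaxter
  ext ⟨a1, a2, a3⟩ ⟨b1, b2, b3⟩
  fin_cases a1 <;> fin_cases a2 <;> fin_cases a3 <;>
    fin_cases b1 <;> fin_cases b2 <;> fin_cases b3 <;>
  · simp only [leg12_apply, leg23_apply, leg13_apply, mul_apply, Fintype.sum_prod_type,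
      Fin.sum_univ_two, submatrix_apply, Prod.swap_prod_mk, id, one_apply, Rhat, of_apply]
    norm_num
    try ring

/-- The quantum Yang–Baxter equation R'₁₂ R'₁₃ R'₂₃ = R'₂₃ R'₁₃ R'₁₂. -/
theorem quantum_yang_baxter' (p q : ℂ) (hp : p ≠ 0) (hq : q ≠ 0) :
    R12' p q * R13' p q * R23' p q = R23' p q * R13' p q * R12' p q := by
  show IsYangBaxter (Rmat' p q)
  rw [Rmat'_eq_smul hp hq]
  exact (isYangBaxter_Rhat_submatrix_swap p q).smul _
end

section
/- Let a,b,c,d satisfy the G_{p,q} relations in an associative algebra, with a, d, Δ₁ = ad − p⁻¹bc and Δ₂ = da + q⁻¹cb invertible. Then the matrix T' with entries (Δ₁⁻¹d, −qΔ₁⁻¹b; pΔ₂⁻¹c, Δ₂⁻¹a) is a two-sided inverse of T = (a,b;c,d), i.e. T·T' = T'·T = I₂. -/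
private lemma conj_smul {K A : Type*} [Field K] [Ring A] [Algebra K A] (k : K) (u e x : A)
    (hue : u * e = 1) (heu : e * u = 1) (h : u * x = k • (x * u)) :
    x * e = k • (e * x) := by
  calc x * e = e * ((u * x) * e) := by
        rw [mul_assoc, ← mul_assoc e u, heu, one_mul]
    _ = e * ((k • (x * u)) * e) := by rw [h]
    _ = k • (e * x) := by
        rw [smul_mul_assoc, mul_assoc, hue, mul_one, mul_smul_comm]

theorem inverse_matrix {K A : Type*} [Field K] [Ring A] [Algebra K A]
    (p q : K) (hp : p ≠ 0) (hq : q ≠ 0) (a b c d : A)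
    (h1 : a * b = (-q) • (b * a)) (h2 : d * b = q • (b * d))
    (h3 : a * c = (-p) • (c * a)) (h4 : d * c = p • (c * d))
    (h5 : b * c = (p * q⁻¹) • (c * b)) (h6 : b * b = 0) (h7 : c * c = 0)
    (h8 : a * d = d * a + (p⁻¹ - q) • (b * c))
    (ha : IsUnit a) (hd : IsUnit d) (e₁ e₂ : A)
    (he₁ : (a * d - p⁻¹ • (b * c)) * e₁ = 1) (he₁' : e₁ * (a * d - p⁻¹ • (b * c)) = 1)
    (he₂ : (d * a + q⁻¹ • (c * b)) * e₂ = 1) (he₂' : e₂ * (d * a + q⁻¹ • (c * b)) = 1) :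
    !![a, b; c, d] * !![e₁ * d, (-q) • (e₁ * b); p • (e₂ * c), e₂ * a] = 1 ∧
    !![e₁ * d, (-q) • (e₁ * b); p • (e₂ * c), e₂ * a] * !![a, b; c, d] = 1 := by
  have hba : ∀ x : A, a * (b * x) = (-q) • (b * (a * x)) := fun x => by
    rw [← mul_assoc, h1, smul_mul_assoc, mul_assoc]
  have hdb : ∀ x : A, d * (b * x) = q • (b * (d * x)) := fun x => by
    rw [← mul_assoc, h2, smul_mul_assoc, mul_assoc]
  have hca : ∀ x : A, a * (c * x) = (-p) • (c * (a * x)) := fun x => by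
    rw [← mul_assoc, h3, smul_mul_assoc, mul_assoc]
  have hdc : ∀ x : A, d * (c * x) = p • (c * (d * x)) := fun x => by
    rw [← mul_assoc, h4, smul_mul_assoc, mul_assoc]
  have hcb : ∀ x : A, b * (c * x) = (p * q⁻¹) • (c * (b * x)) := fun x => by
    rw [← mul_assoc, h5, smul_mul_assoc, mul_assoc]
  have hbb : ∀ x : A, b * (b * x) = 0 := fun x => by
    rw [← mul_assoc, h6, zero_mul]
  have hcc : ∀ x : A, c * (c * x) = 0 := fun x => by
    rw [← mul_assoc, h7, zero_mul]
  have hda : ∀ x : A, a * (d * x) = d * (a * x) + (p⁻¹ - q) • (b * (c * x)) := fun x => by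
    rw [← mul_assoc, h8, add_mul, smul_mul_assoc, mul_assoc, mul_assoc]
  -- pure identities in a,b,c,d
  have hΔd : (a * d - p⁻¹ • (b * c)) * d = (1 : K) • (d * (a * d - p⁻¹ • (b * c))) := by
    simp only [sub_mul, mul_sub, smul_mul_assoc, mul_smul_comm, mul_assoc,
      hba, hdb, hca, hdc, hcb, hbb, hcc, hda, h1, h2, h3, h4, h5, h6, h7, h8,
      smul_smul, smul_add, smul_sub, mul_add, add_mul, smul_zero, mul_zero, zero_mul]
    match_scalars <;> field_simp <;> ring
  have hΔa : (d * a + q⁻¹ • (c * b)) * a = (1 : K) • (a * (d * a + q⁻¹ • (c * b))) := by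
    simp only [add_mul, mul_add, smul_mul_assoc, mul_smul_comm, mul_assoc,
      hba, hdb, hca, hdc, hcb, hbb, hcc, hda, h1, h2, h3, h4, h5, h6, h7, h8,
      smul_smul, smul_add, smul_sub, mul_add, add_mul, smul_zero, mul_zero, zero_mul]
    match_scalars <;> field_simp <;> ring
  have hΔb : (a * d - p⁻¹ • (b * c)) * b = (-(q * q)) • (b * (a * d - p⁻¹ • (b * c))) := by
    simp only [sub_mul, mul_sub, smul_mul_assoc, mul_smul_comm, mul_assoc,
      hba, hdb, hca, hdc, hcb, hbb, hcc, hda, h1, h2, h3, h4, h5, h6, h7, h8,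
      smul_smul, smul_add, smul_sub, mul_add, add_mul, smul_zero, mul_zero, zero_mul]
    match_scalars <;> field_simp <;> ring
  have hΔc : (d * a + q⁻¹ • (c * b)) * c = (-(p * p)) • (c * (d * a + q⁻¹ • (c * b))) := by
    simp only [add_mul, mul_add, smul_mul_assoc, mul_smul_comm, mul_assoc,
      hba, hdb, hca, hdc, hcb, hbb, hcc, hda, h1, h2, h3, h4, h5, h6, h7, h8,
      smul_smul, smul_add, smul_sub, mul_add, add_mul, smul_zero, mul_zero, zero_mul]
    match_scalars <;> field_simp <;> ring
  have hΔbc : (a * d - p⁻¹ • (b * c)) * (b * c)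
      = (p * p * (q * q)) • ((b * c) * (a * d - p⁻¹ • (b * c))) := by
    simp only [sub_mul, mul_sub, smul_mul_assoc, mul_smul_comm, mul_assoc,
      hba, hdb, hca, hdc, hcb, hbb, hcc, hda, h1, h2, h3, h4, h5, h6, h7, h8,
      smul_smul, smul_add, smul_sub, mul_add, add_mul, smul_zero, mul_zero, zero_mul]
    match_scalars <;> field_simp <;> ring
  have hdiff : (d * a + q⁻¹ • (c * b)) - (a * d - p⁻¹ • (b * c)) = (p⁻¹ + q) • (b * c) := by
    rw [h8, h5]
    match_scalars <;> field_simp <;> ring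
  have hbcbc : (b * c) * (b * c) = 0 := by
    simp only [mul_assoc, hcb, hbb, hcc, mul_smul_comm, smul_smul, smul_zero, mul_zero]
  have hbabc : (b * a) * (b * c) = 0 := by
    simp only [mul_assoc, hba, hcb, hbb, hcc, mul_smul_comm, smul_smul, smul_zero, mul_zero]
  have hcdbc : (c * d) * (b * c) = 0 := by
    simp only [mul_assoc, hdb, hdc, hcb, hbb, hcc, h1, h2, h3, h4, h5, mul_smul_comm,
      smul_smul, smul_zero, mul_zero]
  have hcbbc : (c * b) * (b * c) = 0 := by
    simp only [mul_assoc, hbb, hcc, mul_smul_comm, smul_smul, smul_zero, mul_zero]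
  -- commutation with e₁, e₂
  have E1d : d * e₁ = e₁ * d := by
    have := conj_smul (1 : K) _ _ d he₁ he₁' hΔd; rwa [one_smul] at this
  have E2a : a * e₂ = e₂ * a := by
    have := conj_smul (1 : K) _ _ a he₂ he₂' hΔa; rwa [one_smul] at this
  have E1b : b * e₁ = (-(q * q)) • (e₁ * b) := conj_smul _ _ _ b he₁ he₁' hΔb
  have E2c : c * e₂ = (-(p * p)) • (e₂ * c) := conj_smul _ _ _ c he₂ he₂' hΔc
  have E1bc : (b * c) * e₁ = (p * p * (q * q)) • (e₁ * (b * c)) :=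
    conj_smul _ _ _ (b * c) he₁ he₁' hΔbc
  have hq2 : (-(q * q)) ≠ 0 := by simp [hq]
  have hp2 : (-(p * p)) ≠ 0 := by simp [hp]
  have hpq2 : (p * p * (q * q)) ≠ 0 := by simp [hp, hq]
  have E1b' : e₁ * b = (-(q * q))⁻¹ • (b * e₁) := by
    rw [E1b, smul_smul, inv_mul_cancel₀ hq2, one_smul]
  have E2c' : e₂ * c = (-(p * p))⁻¹ • (c * e₂) := by
    rw [E2c, smul_smul, inv_mul_cancel₀ hp2, one_smul]
  have E1bc' : e₁ * (b * c) = (p * p * (q * q))⁻¹ • ((b * c) * e₁) := by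
    rw [E1bc, smul_smul, inv_mul_cancel₀ hpq2, one_smul]
  -- e₁ - e₂
  have hdiffe : e₁ - e₂ = (p⁻¹ + q) • (e₁ * ((b * c) * e₂)) := by
    have step : e₁ * (((d * a + q⁻¹ • (c * b)) - (a * d - p⁻¹ • (b * c))) * e₂)
        = (p⁻¹ + q) • (e₁ * ((b * c) * e₂)) := by
      rw [hdiff, smul_mul_assoc, mul_smul_comm]
    have step2 : e₁ * (((d * a + q⁻¹ • (c * b)) - (a * d - p⁻¹ • (b * c))) * e₂)
        = e₁ - e₂ := by
      rw [sub_mul, mul_sub, he₂, mul_one, ← mul_assoc, he₁', one_mul]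
    rw [← step2, step]
  have kill : ∀ x : A, x * (b * c) = 0 → x * e₁ = x * e₂ := fun x hx => by
    have hx' : x * b * c = 0 := by rw [mul_assoc, hx]
    have h0 : x * e₁ - x * e₂ = 0 := by
      rw [← mul_sub, hdiffe, mul_smul_comm, ← mul_assoc e₁, E1bc', smul_mul_assoc,
        mul_smul_comm, smul_smul]
      simp only [← mul_assoc]
      rw [hx', zero_mul, zero_mul, smul_zero]
    exact sub_eq_zero.mp h0
  have K1 : b * (c * e₁) = b * (c * e₂) := by
    rw [← mul_assoc, kill _ hbcbc, mul_assoc]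
  have K2 : b * (a * e₁) = b * (a * e₂) := by
    rw [← mul_assoc, kill _ hbabc, mul_assoc]
  have K3 : c * (d * e₁) = c * (d * e₂) := by
    rw [← mul_assoc, kill _ hcdbc, mul_assoc]
  have K4 : c * (b * e₁) = c * (b * e₂) := by
    rw [← mul_assoc, kill _ hcbbc, mul_assoc]
  -- the eight entry identities
  have P11 : a * (e₁ * d) + b * (p • (e₂ * c)) = 1 := by
    rw [← E1d, E2c', ← he₁]
    simp only [sub_mul, smul_mul_assoc, mul_smul_comm, smul_smul, mul_assoc]
    rw [K1]
    match_scalars <;> field_simp <;> ring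
  have P12 : a * ((-q) • (e₁ * b)) + b * (e₂ * a) = 0 := by
    rw [E1b', ← E2a]
    simp only [mul_smul_comm, smul_smul, hba, mul_assoc]
    rw [K2]
    match_scalars <;> field_simp <;> ring
  have P21 : c * (e₁ * d) + d * (p • (e₂ * c)) = 0 := by
    rw [← E1d, E2c']
    simp only [mul_smul_comm, smul_smul, hdc, mul_assoc]
    rw [K3]
    match_scalars <;> field_simp <;> ring
  have P22 : c * ((-q) • (e₁ * b)) + d * (e₂ * a) = 1 := by
    rw [E1b', ← E2a, ← he₂]
    simp only [add_mul, smul_mul_assoc, mul_smul_comm, smul_smul, mul_assoc]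
    rw [K4]
    match_scalars <;> field_simp <;> ring
  have Q11 : (e₁ * d) * a + ((-q) • (e₁ * b)) * c = 1 := by
    rw [← he₁', h8]
    simp only [mul_sub, mul_add, sub_mul, add_mul, smul_mul_assoc, mul_smul_comm,
      smul_smul, mul_assoc, smul_add, smul_sub]
    match_scalars <;> field_simp <;> ring
  have Q12 : (e₁ * d) * b + ((-q) • (e₁ * b)) * d = 0 := by
    simp only [smul_mul_assoc, mul_assoc, h2, mul_smul_comm, smul_smul]
    match_scalars <;> field_simp <;> ring
  have Q21 : (p • (e₂ * c)) * a + (e₂ * a) * c = 0 := by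
    simp only [smul_mul_assoc, mul_assoc, h3, mul_smul_comm, smul_smul]
    match_scalars <;> field_simp <;> ring
  have Q22 : (p • (e₂ * c)) * b + (e₂ * a) * d = 1 := by
    rw [← he₂']
    simp only [mul_add, add_mul, smul_mul_assoc, mul_smul_comm, smul_smul, mul_assoc,
      h8, h5, smul_add, smul_sub]
    match_scalars <;> field_simp <;> ring
  constructor
  · rw [Matrix.mul_fin_two, Matrix.one_fin_two, P11, P12, P21, P22]
  · rw [Matrix.mul_fin_two, Matrix.one_fin_two, Q11, Q12, Q21, Q22]
end

section
/- Let a,b,c,d satisfy the G_{p,q} relations with a, d, Δ₂ = da + q⁻¹cb invertible. Then the element D = a²Δ₂⁻¹ commutes with a and with d, and anticommutes with b and with c (Db = −bD, Dc = −cD). -/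
theorem D_commutation {K A : Type*} [Field K] [Ring A] [Algebra K A]
    (p q : K) (hp : p ≠ 0) (hq : q ≠ 0) (a b c d : A)
    (h1 : a * b = (-q) • (b * a)) (h2 : d * b = q • (b * d))
    (h3 : a * c = (-p) • (c * a)) (h4 : d * c = p • (c * d))
    (h5 : b * c = (p * q⁻¹) • (c * b)) (h6 : b * b = 0) (h7 : c * c = 0)
    (h8 : a * d = d * a + (p⁻¹ - q) • (b * c))
    (ha : IsUnit a) (hd : IsUnit d) (e : A)
    (he : (d * a + q⁻¹ • (c * b)) * e = 1) (he' : e * (d * a + q⁻¹ • (c * b)) = 1) :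
    (a * a * e) * a = a * (a * a * e) ∧
    (a * a * e) * d = d * (a * a * e) ∧
    (a * a * e) * b = -(b * (a * a * e)) ∧
    (a * a * e) * c = -(c * (a * a * e)) := by
  set Δ : A := d * a + q⁻¹ • (c * b) with hΔ
  have w1 : ∀ x : A, a*(b*x) = (-q) • (b*(a*x)) := fun x => by
    rw [← mul_assoc, h1, smul_mul_assoc, mul_assoc]
  have w2 : ∀ x : A, d*(b*x) = q • (b*(d*x)) := fun x => by
    rw [← mul_assoc, h2, smul_mul_assoc, mul_assoc]
  have w3 : ∀ x : A, a*(c*x) = (-p) • (c*(a*x)) := fun x => by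
    rw [← mul_assoc, h3, smul_mul_assoc, mul_assoc]
  have w4 : ∀ x : A, d*(c*x) = p • (c*(d*x)) := fun x => by
    rw [← mul_assoc, h4, smul_mul_assoc, mul_assoc]
  have w5 : ∀ x : A, b*(c*x) = (p * q⁻¹) • (c*(b*x)) := fun x => by
    rw [← mul_assoc, h5, smul_mul_assoc, mul_assoc]
  have w6 : ∀ x : A, b*(b*x) = 0 := fun x => by rw [← mul_assoc, h6, zero_mul]
  have w7 : ∀ x : A, c*(c*x) = 0 := fun x => by rw [← mul_assoc, h7, zero_mul]
  have w8 : ∀ x : A, a*(d*x) = d*(a*x) + (p⁻¹ - q) • (b*(c*x)) := fun x => by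
    rw [← mul_assoc, h8, add_mul, smul_mul_assoc, mul_assoc, mul_assoc]
  -- PBW-normalization identities
  have L1 : a * Δ = Δ * a := by
    rw [hΔ]
    simp only [mul_add, add_mul, mul_smul_comm, smul_mul_assoc, smul_smul, mul_assoc,
      h1, h2, h3, h4, h5, h6, h7, h8, w1, w2, w3, w4, w5, w6, w7, w8,
      mul_zero, zero_mul, smul_zero, add_zero, zero_add, smul_add]
    all_goals match_scalars
    all_goals field_simp
    all_goals first | tauto | ring1 | (left; ring1)
  have L2 : b * Δ = (-(q*q))⁻¹ • (Δ * b) := by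
    rw [hΔ]
    simp only [mul_add, add_mul, mul_smul_comm, smul_mul_assoc, smul_smul, mul_assoc,
      h1, h2, h3, h4, h5, h6, h7, h8, w1, w2, w3, w4, w5, w6, w7, w8,
      mul_zero, zero_mul, smul_zero, add_zero, zero_add, smul_add]
    all_goals match_scalars
    all_goals field_simp
    all_goals first | tauto | ring1 | (left; ring1)
  have L3 : c * Δ = (-(p*p))⁻¹ • (Δ * c) := by
    rw [hΔ]
    simp only [mul_add, add_mul, mul_smul_comm, smul_mul_assoc, smul_smul, mul_assoc,
      h1, h2, h3, h4, h5, h6, h7, h8, w1, w2, w3, w4, w5, w6, w7, w8,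
      mul_zero, zero_mul, smul_zero, add_zero, zero_add, smul_add]
    all_goals match_scalars
    all_goals field_simp
    all_goals first | tauto | ring1 | (left; ring1)
  have L4 : d * Δ = Δ * d + (p - p⁻¹*q⁻¹*q⁻¹) • (d*(c*b)) := by
    rw [hΔ]
    simp only [mul_add, add_mul, mul_smul_comm, smul_mul_assoc, smul_smul, mul_assoc,
      h1, h2, h3, h4, h5, h6, h7, h8, w1, w2, w3, w4, w5, w6, w7, w8,
      mul_zero, zero_mul, smul_zero, add_zero, zero_add, smul_add]
    all_goals match_scalars
    all_goals field_simp
    all_goals first | tauto | ring1 | (left; ring1)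
  have L5 : (d*(c*b)) * Δ = (p⁻¹*p⁻¹*q⁻¹*q⁻¹) • (Δ * (d*(c*b))) := by
    rw [hΔ]
    simp only [mul_add, add_mul, mul_smul_comm, smul_mul_assoc, smul_smul, mul_assoc,
      h1, h2, h3, h4, h5, h6, h7, h8, w1, w2, w3, w4, w5, w6, w7, w8,
      mul_zero, zero_mul, smul_zero, add_zero, zero_add, smul_add]
    all_goals match_scalars
    all_goals field_simp
    all_goals first | tauto | ring1 | (left; ring1)
  have L6 : a*(a*(d*(c*b))) = (p*p*p*q*q*q) • ((c*(b*a)) * Δ) := by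
    rw [hΔ]
    simp only [mul_add, add_mul, mul_smul_comm, smul_mul_assoc, smul_smul, mul_assoc,
      h1, h2, h3, h4, h5, h6, h7, h8, w1, w2, w3, w4, w5, w6, w7, w8,
      mul_zero, zero_mul, smul_zero, add_zero, zero_add, smul_add]
    all_goals match_scalars
    all_goals field_simp
    all_goals first | tauto | ring1 | (left; ring1)
  have L7 : a*(a*d) = d*(a*a) + (q⁻¹ - p*p*q) • (c*(b*a)) := by
    simp only [mul_add, add_mul, mul_smul_comm, smul_mul_assoc, smul_smul, mul_assoc,
      h1, h2, h3, h4, h5, h6, h7, h8, w1, w2, w3, w4, w5, w6, w7, w8,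
      mul_zero, zero_mul, smul_zero, add_zero, zero_add, smul_add]
    all_goals match_scalars
    all_goals field_simp
    all_goals first | tauto | ring1 | (left; ring1)
  -- e-sandwich lemmas
  have ea : e * a = a * e := by
    calc e * a = e * a * (Δ * e) := by rw [he, mul_one]
    _ = e * (a * Δ) * e := by simp only [mul_assoc]
    _ = e * (Δ * a) * e := by rw [L1]
    _ = (e * Δ) * (a * e) := by simp only [mul_assoc]
    _ = a * e := by rw [he', one_mul]
  have eb : e * b = (-(q*q))⁻¹ • (b * e) := by
    calc e * b = e * b * (Δ * e) := by rw [he, mul_one]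
    _ = e * (b * Δ) * e := by simp only [mul_assoc]
    _ = (-(q*q))⁻¹ • ((e * Δ) * (b * e)) := by
        rw [L2]; simp only [mul_assoc, smul_mul_assoc, mul_smul_comm, smul_smul]
    _ = (-(q*q))⁻¹ • (b * e) := by rw [he', one_mul]
  have ec : e * c = (-(p*p))⁻¹ • (c * e) := by
    calc e * c = e * c * (Δ * e) := by rw [he, mul_one]
    _ = e * (c * Δ) * e := by simp only [mul_assoc]
    _ = (-(p*p))⁻¹ • ((e * Δ) * (c * e)) := by
        rw [L3]; simp only [mul_assoc, smul_mul_assoc, mul_smul_comm, smul_smul]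
    _ = (-(p*p))⁻¹ • (c * e) := by rw [he', one_mul]
  have edcb : e * (d*(c*b)) = (p⁻¹*p⁻¹*q⁻¹*q⁻¹) • ((d*(c*b)) * e) := by
    calc e * (d*(c*b)) = e * (d*(c*b)) * (Δ * e) := by rw [he, mul_one]
    _ = e * ((d*(c*b)) * Δ) * e := by simp only [mul_assoc]
    _ = (p⁻¹*p⁻¹*q⁻¹*q⁻¹) • ((e * Δ) * ((d*(c*b)) * e)) := by
        rw [L5]; simp only [mul_assoc, smul_mul_assoc, mul_smul_comm, smul_smul]
    _ = (p⁻¹*p⁻¹*q⁻¹*q⁻¹) • ((d*(c*b)) * e) := by rw [he', one_mul]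
  refine ⟨?_, ?_, ?_, ?_⟩
  · -- commutes with a
    calc a * a * e * a = a * (a * (e * a)) := by simp only [mul_assoc]
    _ = a * (a * (a * e)) := by rw [ea]
    _ = a * (a * a * e) := by simp only [mul_assoc]
  · -- commutes with d
    have ed : e * d = d * e + ((p - p⁻¹*q⁻¹*q⁻¹) * (p⁻¹*p⁻¹*q⁻¹*q⁻¹)) • ((d*(c*b)) * (e * e)) := by
      calc e * d = e * d * (Δ * e) := by rw [he, mul_one]
      _ = e * (d * Δ) * e := by simp only [mul_assoc]
      _ = (e * Δ) * (d * e) + (p - p⁻¹*q⁻¹*q⁻¹) • ((e * (d*(c*b))) * e) := by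
          rw [L4]
          simp only [mul_add, add_mul, mul_assoc, smul_mul_assoc, mul_smul_comm, smul_smul]
      _ = d * e + ((p - p⁻¹*q⁻¹*q⁻¹) * (p⁻¹*p⁻¹*q⁻¹*q⁻¹)) • ((d*(c*b)) * (e * e)) := by
          rw [he', one_mul, edcb]
          simp only [mul_assoc, smul_mul_assoc, mul_smul_comm, smul_smul]
    calc a * a * e * d = a * (a * (e * d)) := by simp only [mul_assoc]
    _ = (a * (a * d)) * e
        + ((p - p⁻¹*q⁻¹*q⁻¹) * (p⁻¹*p⁻¹*q⁻¹*q⁻¹)) • ((a * (a * (d*(c*b)))) * (e * e)) := by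
        rw [ed]
        simp only [mul_add, add_mul, mul_assoc, smul_mul_assoc, mul_smul_comm, smul_smul]
    _ = d*(a*a) * e + (q⁻¹ - p*p*q) • ((c*(b*a)) * e)
        + ((p - p⁻¹*q⁻¹*q⁻¹) * (p⁻¹*p⁻¹*q⁻¹*q⁻¹) * (p*p*p*q*q*q)) • ((c*(b*a)) * (Δ * e * e)) := by
        rw [L7, L6]
        simp only [mul_add, add_mul, mul_assoc, smul_mul_assoc, mul_smul_comm, smul_smul]
        all_goals (match_scalars <;> ring)
    _ = d*(a*a) * e + (q⁻¹ - p*p*q) • ((c*(b*a)) * e)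
        + ((p - p⁻¹*q⁻¹*q⁻¹) * (p⁻¹*p⁻¹*q⁻¹*q⁻¹) * (p*p*p*q*q*q)) • ((c*(b*a)) * e) := by
        rw [he, one_mul]
    _ = d*(a*a) * e := by
        have hp' : p * p⁻¹ = 1 := mul_inv_cancel₀ hp
        have hq' : q * q⁻¹ = 1 := mul_inv_cancel₀ hq
        have hn : (q⁻¹ - p*p*q) + (p - p⁻¹*q⁻¹*q⁻¹) * (p⁻¹*p⁻¹*q⁻¹*q⁻¹) * (p*p*p*q*q*q) = 0 := by
          linear_combination (p^2*q*(p*p⁻¹*q*q⁻¹+1) - q⁻¹*(p^2*p⁻¹^2*q^2*q⁻¹^2 + p*p⁻¹*q*q⁻¹ + 1)) * ((p * p⁻¹) * hq' + hp')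
        rw [add_assoc, ← add_smul, hn, zero_smul, add_zero]
    _ = d * (a * a * e) := by simp only [mul_assoc]
  · -- anticommutes with b
    calc a * a * e * b = a * (a * (e * b)) := by simp only [mul_assoc]
    _ = (-(q*q))⁻¹ • (a * (a * (b * e))) := by
        rw [eb]; simp only [mul_smul_comm]
    _ = ((-(q*q))⁻¹ * ((-q) * (-q))) • (b * (a * (a * e))) := by
        simp only [w1, mul_smul_comm, smul_smul, smul_mul_assoc, mul_assoc]
        all_goals (match_scalars <;> ring)
    _ = -(b * (a * a * e)) := by
        simp only [mul_assoc]
        match_scalars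
        all_goals field_simp
        all_goals try tauto
        all_goals ring
  · -- anticommutes with c
    calc a * a * e * c = a * (a * (e * c)) := by simp only [mul_assoc]
    _ = (-(p*p))⁻¹ • (a * (a * (c * e))) := by
        rw [ec]; simp only [mul_smul_comm]
    _ = ((-(p*p))⁻¹ * ((-p) * (-p))) • (c * (a * (a * e))) := by
        simp only [w3, mul_smul_comm, smul_smul, smul_mul_assoc, mul_assoc]
        all_goals (match_scalars <;> ring)
    _ = -(c * (a * a * e)) := by
        simp only [mul_assoc]
        match_scalars
        all_goals field_simp
        all_goals try tauto
        all_goals ring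
end

section
/- Let a,b,c,d satisfy the G_{p,q} relations with a, d, Δ₂ = da + q⁻¹cb invertible. Then the element 𝐃 = (a²Δ₂⁻¹)² is central in the subalgebra generated by a, b, c, d (it commutes with each of a, b, c, d). -/
set_option maxHeartbeats 4000000 in
theorem quantum_determinant_central {K A : Type*} [Field K] [Ring A] [Algebra K A]
    (p q : K) (hp : p ≠ 0) (hq : q ≠ 0) (a b c d : A)
    (h1 : a * b = (-q) • (b * a)) (h2 : d * b = q • (b * d))
    (h3 : a * c = (-p) • (c * a)) (h4 : d * c = p • (c * d))
    (h5 : b * c = (p * q⁻¹) • (c * b)) (h6 : b * b = 0) (h7 : c * c = 0)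
    (h8 : a * d = d * a + (p⁻¹ - q) • (b * c))
    (ha : IsUnit a) (hd : IsUnit d) (e : A)
    (he : (d * a + q⁻¹ • (c * b)) * e = 1) (he' : e * (d * a + q⁻¹ • (c * b)) = 1) :
    (a * a * e) ^ 2 * a = a * (a * a * e) ^ 2 ∧
    (a * a * e) ^ 2 * b = b * (a * a * e) ^ 2 ∧
    (a * a * e) ^ 2 * c = c * (a * a * e) ^ 2 ∧
    (a * a * e) ^ 2 * d = d * (a * a * e) ^ 2 := by
  have g1 : ∀ x : A, a*(b*x) = (-q)•(b*(a*x)) := fun x => by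
    rw [← mul_assoc, h1, smul_mul_assoc, mul_assoc]
  have g2 : ∀ x : A, d*(b*x) = q•(b*(d*x)) := fun x => by
    rw [← mul_assoc, h2, smul_mul_assoc, mul_assoc]
  have g3 : ∀ x : A, a*(c*x) = (-p)•(c*(a*x)) := fun x => by
    rw [← mul_assoc, h3, smul_mul_assoc, mul_assoc]
  have g4 : ∀ x : A, d*(c*x) = p•(c*(d*x)) := fun x => by
    rw [← mul_assoc, h4, smul_mul_assoc, mul_assoc]
  have g5 : ∀ x : A, b*(c*x) = (p*q⁻¹)•(c*(b*x)) := fun x => by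
    rw [← mul_assoc, h5, smul_mul_assoc, mul_assoc]
  have g6 : ∀ x : A, b*(b*x) = 0 := fun x => by rw [← mul_assoc, h6, zero_mul]
  have g7 : ∀ x : A, c*(c*x) = 0 := fun x => by rw [← mul_assoc, h7, zero_mul]
  have g8 : ∀ x : A, a*(d*x) = d*(a*x) + (p⁻¹-q)•(b*(c*x)) := fun x => by
    rw [← mul_assoc, h8, add_mul, smul_mul_assoc, mul_assoc, mul_assoc]
  set Δ := d * a + q⁻¹ • (c * b) with hΔdef
  have hΔa : Δ * a = a * Δ := by
    rw [hΔdef]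
    simp only [mul_add, add_mul, mul_assoc, smul_mul_assoc, mul_smul_comm, smul_smul,
      smul_add, g1, g2, g3, g4, g5, g6, g7, g8, h1, h2, h3, h4, h5, h6, h7, h8,
      mul_zero, zero_mul, smul_zero, add_zero, zero_add]
    match_scalars <;> try (field_simp [hp, hq]; try ring)
    all_goals (field_simp [hp, hq]; try ring)
  have hΔb : Δ * b = (-(q*q)) • (b * Δ) := by
    rw [hΔdef]
    simp only [mul_add, add_mul, mul_assoc, smul_mul_assoc, mul_smul_comm, smul_smul,
      smul_add, g1, g2, g3, g4, g5, g6, g7, g8, h1, h2, h3, h4, h5, h6, h7, h8,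
      mul_zero, zero_mul, smul_zero, add_zero, zero_add]
    match_scalars <;> try (field_simp [hp, hq]; try ring)
    all_goals (field_simp [hp, hq]; try ring)
  have hΔc : Δ * c = (-(p*p)) • (c * Δ) := by
    rw [hΔdef]
    simp only [mul_add, add_mul, mul_assoc, smul_mul_assoc, mul_smul_comm, smul_smul,
      smul_add, g1, g2, g3, g4, g5, g6, g7, g8, h1, h2, h3, h4, h5, h6, h7, h8,
      mul_zero, zero_mul, smul_zero, add_zero, zero_add]
    match_scalars <;> try (field_simp [hp, hq]; try ring)
    all_goals (field_simp [hp, hq]; try ring)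
  have hmain : a*(a*(a*(a*(d*(Δ*Δ))))) = Δ*(Δ*(d*(a*(a*(a*a))))) := by
    rw [hΔdef]
    simp only [mul_add, add_mul, mul_assoc, smul_mul_assoc, mul_smul_comm, smul_smul,
      smul_add, g1, g2, g3, g4, g5, g6, g7, g8, h1, h2, h3, h4, h5, h6, h7, h8,
      mul_zero, zero_mul, smul_zero, add_zero, zero_add]
    match_scalars <;> try (field_simp [hp, hq]; try ring)
    all_goals (field_simp [hp, hq]; try ring)
  -- commutation of e with a, b, c
  have hea : e * a = a * e := by
    calc e * a = e * (a * (Δ * e)) := by rw [he, mul_one]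
      _ = e * ((a * Δ) * e) := by rw [mul_assoc]
      _ = e * ((Δ * a) * e) := by rw [hΔa]
      _ = (e * Δ) * (a * e) := by simp only [mul_assoc]
      _ = a * e := by rw [he', one_mul]
  have heb : e * b = (-(q⁻¹*q⁻¹)) • (b * e) := by
    have hbΔ : b * Δ = (-(q⁻¹*q⁻¹)) • (Δ * b) := by
      rw [hΔb, smul_smul]
      have hs : -(q⁻¹*q⁻¹) * -(q*q) = 1 := by field_simp
      rw [hs, one_smul]
    calc e * b = e * (b * (Δ * e)) := by rw [he, mul_one]
      _ = e * ((b * Δ) * e) := by rw [mul_assoc]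
      _ = (-(q⁻¹*q⁻¹)) • (e * ((Δ * b) * e)) := by rw [hbΔ, smul_mul_assoc, mul_smul_comm]
      _ = (-(q⁻¹*q⁻¹)) • ((e * Δ) * (b * e)) := by simp only [mul_assoc]
      _ = (-(q⁻¹*q⁻¹)) • (b * e) := by rw [he', one_mul]
  have hec : e * c = (-(p⁻¹*p⁻¹)) • (c * e) := by
    have hcΔ : c * Δ = (-(p⁻¹*p⁻¹)) • (Δ * c) := by
      rw [hΔc, smul_smul]
      have hs : -(p⁻¹*p⁻¹) * -(p*p) = 1 := by field_simp
      rw [hs, one_smul]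
    calc e * c = e * (c * (Δ * e)) := by rw [he, mul_one]
      _ = e * ((c * Δ) * e) := by rw [mul_assoc]
      _ = (-(p⁻¹*p⁻¹)) • (e * ((Δ * c) * e)) := by rw [hcΔ, smul_mul_assoc, mul_smul_comm]
      _ = (-(p⁻¹*p⁻¹)) • ((e * Δ) * (c * e)) := by simp only [mul_assoc]
      _ = (-(p⁻¹*p⁻¹)) • (c * e) := by rw [he', one_mul]
  have heax : ∀ x : A, e*(a*x) = a*(e*x) := fun x => by
    rw [← mul_assoc, hea, mul_assoc]
  -- D = a*a*e commutes / anticommutes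
  have hDa : (a*a*e) * a = a * (a*a*e) := by
    simp only [mul_assoc, hea]
  have hDb : (a*a*e) * b = -(b * (a*a*e)) := by
    calc (a*a*e) * b = a*(a*(e*b)) := by simp only [mul_assoc]
      _ = (-(q⁻¹*q⁻¹)) • (a*(a*(b*e))) := by rw [heb, mul_smul_comm, mul_smul_comm]
      _ = (-(q⁻¹*q⁻¹)) • ((-q) • (a * (b * (a * e)))) := by rw [g1 e, mul_smul_comm]
      _ = (-(q⁻¹*q⁻¹)) • ((-q) • ((-q) • (b * (a * (a * e))))) := by rw [g1 (a*e)]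
      _ = ((-(q⁻¹*q⁻¹)) * ((-q) * (-q))) • (b * (a * (a * e))) := by
          rw [smul_smul, smul_smul, mul_assoc]
      _ = (-1 : K) • (b * (a * (a * e))) := by
          congr 1
          field_simp
      _ = -(b * (a*a*e)) := by rw [neg_one_smul, mul_assoc]
  have hDc : (a*a*e) * c = -(c * (a*a*e)) := by
    calc (a*a*e) * c = a*(a*(e*c)) := by simp only [mul_assoc]
      _ = (-(p⁻¹*p⁻¹)) • (a*(a*(c*e))) := by rw [hec, mul_smul_comm, mul_smul_comm]
      _ = (-(p⁻¹*p⁻¹)) • ((-p) • (a * (c * (a * e)))) := by rw [g3 e, mul_smul_comm]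
      _ = (-(p⁻¹*p⁻¹)) • ((-p) • ((-p) • (c * (a * (a * e))))) := by rw [g3 (a*e)]
      _ = ((-(p⁻¹*p⁻¹)) * ((-p) * (-p))) • (c * (a * (a * e))) := by
          rw [smul_smul, smul_smul, mul_assoc]
      _ = (-1 : K) • (c * (a * (a * e))) := by
          congr 1
          field_simp
      _ = -(c * (a*a*e)) := by rw [neg_one_smul, mul_assoc]
  -- the d part
  have hx1 : ∀ x : A, Δ*(e*x) = x := fun x => by rw [← mul_assoc, he, one_mul]
  have hx2 : ∀ x : A, e*(Δ*x) = x := fun x => by rw [← mul_assoc, he', one_mul]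
  have hD2 : (a*a*e)*(a*a*e) = a*(a*(a*(a*(e*e)))) := by
    simp only [mul_assoc, heax]
  have hDDd : ((a*a*e) * (a*a*e)) * d = d * ((a*a*e) * (a*a*e)) := by
    have key := congrArg (fun x : A => (e*e) * (x * (e*e))) hmain
    simp only [mul_assoc, hx1, hx2, he, he', mul_one, one_mul] at key
    simp only [heax] at key
    rw [hD2]
    simpa only [mul_assoc] using key
  refine ⟨?_, ?_, ?_, ?_⟩
  · rw [pow_two, mul_assoc, hDa, ← mul_assoc, hDa, mul_assoc]
  · rw [pow_two, mul_assoc, hDb, mul_neg, ← mul_assoc, hDb, neg_mul, neg_neg, mul_assoc]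
  · rw [pow_two, mul_assoc, hDc, mul_neg, ← mul_assoc, hDc, neg_mul, neg_neg, mul_assoc]
  · rw [pow_two]
    exact hDDd
end

section
/- Let T = (a,b;c,d) and T' = (a',b';c',d') be two matrices whose entries satisfy the G_{p,q} relations in an algebra A, with every entry of T commuting with every entry of T'. Then the entries of the product matrix TT' again satisfy the G_{p,q} relations: e.g. (TT')₁₁(TT')₁₂ = −q(TT')₁₂(TT')₁₁, ((TT')₁₂)² = 0, and (TT')₁₁(TT')₂₂ = (TT')₂₂(TT')₁₁ + (p⁻¹−q)(TT')₁₂(TT')₂₁, etc. -/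
theorem product_satisfies_relations {K A : Type*} [Field K] [Ring A] [Algebra K A]
    (p q : K) (hp : p ≠ 0) (hq : q ≠ 0) (a b c d : A) (a' b' c' d' : A)
    (h1 : a * b = (-q) • (b * a)) (h2 : d * b = q • (b * d))
    (h3 : a * c = (-p) • (c * a)) (h4 : d * c = p • (c * d))
    (h5 : b * c = (p * q⁻¹) • (c * b)) (h6 : b * b = 0) (h7 : c * c = 0)
    (h8 : a * d = d * a + (p⁻¹ - q) • (b * c))
    (h1' : a' * b' = (-q) • (b' * a')) (h2' : d' * b' = q • (b' * d'))
    (h3' : a' * c' = (-p) • (c' * a')) (h4' : d' * c' = p • (c' * d'))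
    (h5' : b' * c' = (p * q⁻¹) • (c' * b')) (h6' : b' * b' = 0) (h7' : c' * c' = 0)
    (h8' : a' * d' = d' * a' + (p⁻¹ - q) • (b' * c'))
    (hcomm : ∀ x ∈ ({a, b, c, d} : Set A), ∀ y ∈ ({a', b', c', d'} : Set A), Commute x y) :
    (a * a' + b * c') * (a * b' + b * d') = (-q) • ((a * b' + b * d') * (a * a' + b * c')) ∧
    (c * b' + d * d') * (a * b' + b * d') = q • ((a * b' + b * d') * (c * b' + d * d')) ∧
    (a * a' + b * c') * (c * a' + d * c') = (-p) • ((c * a' + d * c') * (a * a' + b * c')) ∧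
    (c * b' + d * d') * (c * a' + d * c') = p • ((c * a' + d * c') * (c * b' + d * d')) ∧
    (a * b' + b * d') * (c * a' + d * c') = (p * q⁻¹) • ((c * a' + d * c') * (a * b' + b * d')) ∧
    (a * b' + b * d') * (a * b' + b * d') = 0 ∧
    (c * a' + d * c') * (c * a' + d * c') = 0 ∧
    (a * a' + b * c') * (c * b' + d * d')
      = (c * b' + d * d') * (a * a' + b * c')
        + (p⁻¹ - q) • ((a * b' + b * d') * (c * a' + d * c')) := by
  have L : ∀ x y : A, Commute x y → ∀ t : A, y * (x * t) = x * (y * t) := by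
    intro x y h t
    rw [← mul_assoc, ← h.eq, mul_assoc]
  have ma : a ∈ ({a, b, c, d} : Set A) := by simp
  have mb : b ∈ ({a, b, c, d} : Set A) := by simp
  have mc : c ∈ ({a, b, c, d} : Set A) := by simp
  have md : d ∈ ({a, b, c, d} : Set A) := by simp
  have ma' : a' ∈ ({a', b', c', d'} : Set A) := by simp
  have mb' : b' ∈ ({a', b', c', d'} : Set A) := by simp
  have mc' : c' ∈ ({a', b', c', d'} : Set A) := by simp
  have md' : d' ∈ ({a', b', c', d'} : Set A) := by simp
  have Caa := L a a' (hcomm a ma a' ma')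
  have Cab := L a b' (hcomm a ma b' mb')
  have Cac := L a c' (hcomm a ma c' mc')
  have Cad := L a d' (hcomm a ma d' md')
  have Cba := L b a' (hcomm b mb a' ma')
  have Cbb := L b b' (hcomm b mb b' mb')
  have Cbc := L b c' (hcomm b mb c' mc')
  have Cbd := L b d' (hcomm b mb d' md')
  have Cca := L c a' (hcomm c mc a' ma')
  have Ccb := L c b' (hcomm c mc b' mb')
  have Ccc := L c c' (hcomm c mc c' mc')
  have Ccd := L c d' (hcomm c mc d' md')
  have Cda := L d a' (hcomm d md a' ma')
  have Cdb := L d b' (hcomm d md b' mb')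
  have Cdc := L d c' (hcomm d md c' mc')
  have Cdd := L d d' (hcomm d md d' md')
  -- lifted unprimed relations
  have R1 : ∀ t : A, a * (b * t) = (-q) • (b * (a * t)) := by
    intro t; rw [← mul_assoc, h1, smul_mul_assoc, mul_assoc]
  have R2 : ∀ t : A, d * (b * t) = q • (b * (d * t)) := by
    intro t; rw [← mul_assoc, h2, smul_mul_assoc, mul_assoc]
  have R3 : ∀ t : A, a * (c * t) = (-p) • (c * (a * t)) := by
    intro t; rw [← mul_assoc, h3, smul_mul_assoc, mul_assoc]
  have R4 : ∀ t : A, d * (c * t) = p • (c * (d * t)) := by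
    intro t; rw [← mul_assoc, h4, smul_mul_assoc, mul_assoc]
  have R5 : ∀ t : A, b * (c * t) = (p * q⁻¹) • (c * (b * t)) := by
    intro t; rw [← mul_assoc, h5, smul_mul_assoc, mul_assoc]
  have R6 : ∀ t : A, b * (b * t) = 0 := by
    intro t; rw [← mul_assoc, h6, zero_mul]
  have R7 : ∀ t : A, c * (c * t) = 0 := by
    intro t; rw [← mul_assoc, h7, zero_mul]
  have R8 : ∀ t : A, a * (d * t) = d * (a * t) + (p⁻¹ - q) • (b * (c * t)) := by
    intro t; rw [← mul_assoc, h8, add_mul, smul_mul_assoc, mul_assoc, mul_assoc]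
  refine ⟨?_, ?_, ?_, ?_, ?_, ?_, ?_, ?_⟩ <;>
  · simp only [mul_add, add_mul, smul_add, mul_assoc, Caa, Cab, Cac, Cad, Cba, Cbb, Cbc, Cbd,
      Cca, Ccb, Ccc, Ccd, Cda, Cdb, Cdc, Cdd, R1, R2, R3, R4, R5, R6, R7, R8,
      h1', h2', h3', h4', h5', h6', h7', h8', mul_add, smul_mul_assoc, mul_smul_comm,
      smul_smul, smul_add, mul_zero, smul_zero, add_zero, zero_add]
    match_scalars <;> field_simp <;> ring
end

section
/- With T, T' two commuting G_{p,q} matrices as above, and all required elements invertible, the quantity D(T) = a²Δ₂(T)⁻¹ is multiplicative: D(TT') = D(T)D(T'), where Δ₂(T) = da + q⁻¹cb. -/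
set_option maxHeartbeats 4000000

theorem D_multiplicative {K A : Type*} [Field K] [Ring A] [Algebra K A]
    (p q : K) (hp : p ≠ 0) (hq : q ≠ 0) (a b c d : A) (a' b' c' d' : A)
    (h1 : a * b = (-q) • (b * a)) (h2 : d * b = q • (b * d))
    (h3 : a * c = (-p) • (c * a)) (h4 : d * c = p • (c * d))
    (h5 : b * c = (p * q⁻¹) • (c * b)) (h6 : b * b = 0) (h7 : c * c = 0)
    (h8 : a * d = d * a + (p⁻¹ - q) • (b * c))
    (h1' : a' * b' = (-q) • (b' * a')) (h2' : d' * b' = q • (b' * d'))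
    (h3' : a' * c' = (-p) • (c' * a')) (h4' : d' * c' = p • (c' * d'))
    (h5' : b' * c' = (p * q⁻¹) • (c' * b')) (h6' : b' * b' = 0) (h7' : c' * c' = 0)
    (h8' : a' * d' = d' * a' + (p⁻¹ - q) • (b' * c'))
    (hcomm : ∀ x ∈ ({a, b, c, d} : Set A), ∀ y ∈ ({a', b', c', d'} : Set A), Commute x y)
    (ha : IsUnit a) (hd : IsUnit d) (ha' : IsUnit a') (hd' : IsUnit d')
    (e e' e'' : A)
    (he : (d * a + q⁻¹ • (c * b)) * e = 1) (heL : e * (d * a + q⁻¹ • (c * b)) = 1)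
    (he' : (d' * a' + q⁻¹ • (c' * b')) * e' = 1)
    (heL' : e' * (d' * a' + q⁻¹ • (c' * b')) = 1)
    (he'' : ((c * b' + d * d') * (a * a' + b * c')
        + q⁻¹ • ((c * a' + d * c') * (a * b' + b * d'))) * e'' = 1)
    (heL'' : e'' * ((c * b' + d * d') * (a * a' + b * c')
        + q⁻¹ • ((c * a' + d * c') * (a * b' + b * d'))) = 1) :
    (a * a' + b * c') * (a * a' + b * c') * e'' = (a * a * e) * (a' * a' * e') := by
  have r_ab1 : a * b = (-q) • (b * a) := h1
  have r_ab2 : ∀ w : A, a * (b * w) = (-q) • (b * (a * w)) := fun w => by rw [← mul_assoc, h1, smul_mul_assoc, mul_assoc]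
  have r_ac1 : a * c = (-p) • (c * a) := h3
  have r_ac2 : ∀ w : A, a * (c * w) = (-p) • (c * (a * w)) := fun w => by rw [← mul_assoc, h3, smul_mul_assoc, mul_assoc]
  have r_db1 : d * b = q • (b * d) := h2
  have r_db2 : ∀ w : A, d * (b * w) = q • (b * (d * w)) := fun w => by rw [← mul_assoc, h2, smul_mul_assoc, mul_assoc]
  have r_dc1 : d * c = p • (c * d) := h4
  have r_dc2 : ∀ w : A, d * (c * w) = p • (c * (d * w)) := fun w => by rw [← mul_assoc, h4, smul_mul_assoc, mul_assoc]
  have r_bc1 : b * c = (p * q⁻¹) • (c * b) := h5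
  have r_bc2 : ∀ w : A, b * (c * w) = (p * q⁻¹) • (c * (b * w)) := fun w => by rw [← mul_assoc, h5, smul_mul_assoc, mul_assoc]
  have r_ad1 : a * d = d * a + (p⁻¹ - q) • (b * c) := h8
  have r_ad2 : ∀ w : A, a * (d * w) = d * (a * w) + (p⁻¹ - q) • (b * (c * w)) := fun w => by rw [← mul_assoc, h8, add_mul, smul_mul_assoc, mul_assoc, mul_assoc]
  have r_bb1 : b * b = 0 := h6
  have r_bb2 : ∀ w : A, b * (b * w) = 0 := fun w => by rw [← mul_assoc, h6, zero_mul]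
  have r_cc1 : c * c = 0 := h7
  have r_cc2 : ∀ w : A, c * (c * w) = 0 := fun w => by rw [← mul_assoc, h7, zero_mul]
  have r_ab'1 : a' * b' = (-q) • (b' * a') := h1'
  have r_ab'2 : ∀ w : A, a' * (b' * w) = (-q) • (b' * (a' * w)) := fun w => by rw [← mul_assoc, h1', smul_mul_assoc, mul_assoc]
  have r_ac'1 : a' * c' = (-p) • (c' * a') := h3'
  have r_ac'2 : ∀ w : A, a' * (c' * w) = (-p) • (c' * (a' * w)) := fun w => by rw [← mul_assoc, h3', smul_mul_assoc, mul_assoc]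
  have r_db'1 : d' * b' = q • (b' * d') := h2'
  have r_db'2 : ∀ w : A, d' * (b' * w) = q • (b' * (d' * w)) := fun w => by rw [← mul_assoc, h2', smul_mul_assoc, mul_assoc]
  have r_dc'1 : d' * c' = p • (c' * d') := h4'
  have r_dc'2 : ∀ w : A, d' * (c' * w) = p • (c' * (d' * w)) := fun w => by rw [← mul_assoc, h4', smul_mul_assoc, mul_assoc]
  have r_bc'1 : b' * c' = (p * q⁻¹) • (c' * b') := h5'
  have r_bc'2 : ∀ w : A, b' * (c' * w) = (p * q⁻¹) • (c' * (b' * w)) := fun w => by rw [← mul_assoc, h5', smul_mul_assoc, mul_assoc]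
  have r_ad'1 : a' * d' = d' * a' + (p⁻¹ - q) • (b' * c') := h8'
  have r_ad'2 : ∀ w : A, a' * (d' * w) = d' * (a' * w) + (p⁻¹ - q) • (b' * (c' * w)) := fun w => by rw [← mul_assoc, h8', add_mul, smul_mul_assoc, mul_assoc, mul_assoc]
  have r_bb'1 : b' * b' = 0 := h6'
  have r_bb'2 : ∀ w : A, b' * (b' * w) = 0 := fun w => by rw [← mul_assoc, h6', zero_mul]
  have r_cc'1 : c' * c' = 0 := h7'
  have r_cc'2 : ∀ w : A, c' * (c' * w) = 0 := fun w => by rw [← mul_assoc, h7', zero_mul]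
  have x_apa1 : a' * a = a * a' := (hcomm a (show a ∈ ({a, b, c, d} : Set A) by simp) a' (show a' ∈ ({a', b', c', d'} : Set A) by simp)).eq.symm
  have x_apa2 : ∀ w : A, a' * (a * w) = a * (a' * w) := fun w => by rw [← mul_assoc, x_apa1, mul_assoc]
  have x_bpa1 : b' * a = a * b' := (hcomm a (show a ∈ ({a, b, c, d} : Set A) by simp) b' (show b' ∈ ({a', b', c', d'} : Set A) by simp)).eq.symm
  have x_bpa2 : ∀ w : A, b' * (a * w) = a * (b' * w) := fun w => by rw [← mul_assoc, x_bpa1, mul_assoc]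
  have x_cpa1 : c' * a = a * c' := (hcomm a (show a ∈ ({a, b, c, d} : Set A) by simp) c' (show c' ∈ ({a', b', c', d'} : Set A) by simp)).eq.symm
  have x_cpa2 : ∀ w : A, c' * (a * w) = a * (c' * w) := fun w => by rw [← mul_assoc, x_cpa1, mul_assoc]
  have x_dpa1 : d' * a = a * d' := (hcomm a (show a ∈ ({a, b, c, d} : Set A) by simp) d' (show d' ∈ ({a', b', c', d'} : Set A) by simp)).eq.symm
  have x_dpa2 : ∀ w : A, d' * (a * w) = a * (d' * w) := fun w => by rw [← mul_assoc, x_dpa1, mul_assoc]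
  have x_apb1 : a' * b = b * a' := (hcomm b (show b ∈ ({a, b, c, d} : Set A) by simp) a' (show a' ∈ ({a', b', c', d'} : Set A) by simp)).eq.symm
  have x_apb2 : ∀ w : A, a' * (b * w) = b * (a' * w) := fun w => by rw [← mul_assoc, x_apb1, mul_assoc]
  have x_bpb1 : b' * b = b * b' := (hcomm b (show b ∈ ({a, b, c, d} : Set A) by simp) b' (show b' ∈ ({a', b', c', d'} : Set A) by simp)).eq.symm
  have x_bpb2 : ∀ w : A, b' * (b * w) = b * (b' * w) := fun w => by rw [← mul_assoc, x_bpb1, mul_assoc]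
  have x_cpb1 : c' * b = b * c' := (hcomm b (show b ∈ ({a, b, c, d} : Set A) by simp) c' (show c' ∈ ({a', b', c', d'} : Set A) by simp)).eq.symm
  have x_cpb2 : ∀ w : A, c' * (b * w) = b * (c' * w) := fun w => by rw [← mul_assoc, x_cpb1, mul_assoc]
  have x_dpb1 : d' * b = b * d' := (hcomm b (show b ∈ ({a, b, c, d} : Set A) by simp) d' (show d' ∈ ({a', b', c', d'} : Set A) by simp)).eq.symm
  have x_dpb2 : ∀ w : A, d' * (b * w) = b * (d' * w) := fun w => by rw [← mul_assoc, x_dpb1, mul_assoc]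
  have x_apc1 : a' * c = c * a' := (hcomm c (show c ∈ ({a, b, c, d} : Set A) by simp) a' (show a' ∈ ({a', b', c', d'} : Set A) by simp)).eq.symm
  have x_apc2 : ∀ w : A, a' * (c * w) = c * (a' * w) := fun w => by rw [← mul_assoc, x_apc1, mul_assoc]
  have x_bpc1 : b' * c = c * b' := (hcomm c (show c ∈ ({a, b, c, d} : Set A) by simp) b' (show b' ∈ ({a', b', c', d'} : Set A) by simp)).eq.symm
  have x_bpc2 : ∀ w : A, b' * (c * w) = c * (b' * w) := fun w => by rw [← mul_assoc, x_bpc1, mul_assoc]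
  have x_cpc1 : c' * c = c * c' := (hcomm c (show c ∈ ({a, b, c, d} : Set A) by simp) c' (show c' ∈ ({a', b', c', d'} : Set A) by simp)).eq.symm
  have x_cpc2 : ∀ w : A, c' * (c * w) = c * (c' * w) := fun w => by rw [← mul_assoc, x_cpc1, mul_assoc]
  have x_dpc1 : d' * c = c * d' := (hcomm c (show c ∈ ({a, b, c, d} : Set A) by simp) d' (show d' ∈ ({a', b', c', d'} : Set A) by simp)).eq.symm
  have x_dpc2 : ∀ w : A, d' * (c * w) = c * (d' * w) := fun w => by rw [← mul_assoc, x_dpc1, mul_assoc]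
  have x_apd1 : a' * d = d * a' := (hcomm d (show d ∈ ({a, b, c, d} : Set A) by simp) a' (show a' ∈ ({a', b', c', d'} : Set A) by simp)).eq.symm
  have x_apd2 : ∀ w : A, a' * (d * w) = d * (a' * w) := fun w => by rw [← mul_assoc, x_apd1, mul_assoc]
  have x_bpd1 : b' * d = d * b' := (hcomm d (show d ∈ ({a, b, c, d} : Set A) by simp) b' (show b' ∈ ({a', b', c', d'} : Set A) by simp)).eq.symm
  have x_bpd2 : ∀ w : A, b' * (d * w) = d * (b' * w) := fun w => by rw [← mul_assoc, x_bpd1, mul_assoc]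
  have x_cpd1 : c' * d = d * c' := (hcomm d (show d ∈ ({a, b, c, d} : Set A) by simp) c' (show c' ∈ ({a', b', c', d'} : Set A) by simp)).eq.symm
  have x_cpd2 : ∀ w : A, c' * (d * w) = d * (c' * w) := fun w => by rw [← mul_assoc, x_cpd1, mul_assoc]
  have x_dpd1 : d' * d = d * d' := (hcomm d (show d ∈ ({a, b, c, d} : Set A) by simp) d' (show d' ∈ ({a', b', c', d'} : Set A) by simp)).eq.symm
  have x_dpd2 : ∀ w : A, d' * (d * w) = d * (d' * w) := fun w => by rw [← mul_assoc, x_dpd1, mul_assoc]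

  set Δ : A := d * a + q⁻¹ • (c * b) with hΔ
  set Δ' : A := d' * a' + q⁻¹ • (c' * b') with hΔ'
  set Δ'' : A := (c * b' + d * d') * (a * a' + b * c')
      + q⁻¹ • ((c * a' + d * c') * (a * b' + b * d')) with hΔ''
  set A2 : A := a * a' + b * c' with hA2
  have L : ∀ x u y : A, x * u = 1 → u * x = 1 → x * y = y * x → u * y = y * u := by
    intro x u y hxu hux hxy
    calc u * y = u * y * (x * u) := by rw [hxu, mul_one]
    _ = u * (y * x) * u := by noncomm_ring
    _ = u * (x * y) * u := by rw [hxy]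
    _ = (u * x) * (y * u) := by noncomm_ring
    _ = y * u := by rw [hux, one_mul]
  have C1 : Δ * a' = a' * Δ := by
    rw [hΔ]; simp only [r_ab1, r_ab2, r_ac1, r_ac2, r_db1, r_db2, r_dc1, r_dc2, r_bc1, r_bc2, r_ad1, r_ad2, r_bb1, r_bb2, r_cc1, r_cc2, r_ab'1, r_ab'2, r_ac'1, r_ac'2, r_db'1, r_db'2, r_dc'1, r_dc'2, r_bc'1, r_bc'2, r_ad'1, r_ad'2, r_bb'1, r_bb'2, r_cc'1, r_cc'2, x_apa1, x_apa2, x_bpa1, x_bpa2, x_cpa1, x_cpa2, x_dpa1, x_dpa2, x_apb1, x_apb2, x_bpb1, x_bpb2, x_cpb1, x_cpb2, x_dpb1, x_dpb2, x_apc1, x_apc2, x_bpc1, x_bpc2, x_cpc1, x_cpc2, x_dpc1, x_dpc2, x_apd1, x_apd2, x_bpd1, x_bpd2, x_cpd1, x_cpd2, x_dpd1, x_dpd2, mul_assoc, mul_add, add_mul, smul_add, smul_mul_assoc, mul_smul_comm, smul_smul, mul_zero, zero_mul, smul_zero, add_zero, zero_add, mul_one, one_mul]; all_goals (match_scalars <;>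 ((try ring_nf); (try simp only [inv_pow]); (try field_simp); (try simp only [div_eq_mul_inv, mul_inv_rev]); (try ring_nf); (try simp only [inv_pow]); (try field_simp); (try simp only [div_eq_mul_inv, mul_inv_rev]); (try ring_nf); (try simp only [inv_pow]); (try field_simp); (try ring1)))
  have C2 : Δ * Δ' = Δ' * Δ := by
    rw [hΔ, hΔ']; simp only [r_ab1, r_ab2, r_ac1, r_ac2, r_db1, r_db2, r_dc1, r_dc2, r_bc1, r_bc2, r_ad1, r_ad2, r_bb1, r_bb2, r_cc1, r_cc2, r_ab'1, r_ab'2, r_ac'1, r_ac'2, r_db'1, r_db'2, r_dc'1, r_dc'2, r_bc'1, r_bc'2, r_ad'1, r_ad'2, r_bb'1, r_bb'2, r_cc'1, r_cc'2, x_apa1, x_apa2, x_bpa1, x_bpa2, x_cpa1, x_cpa2, x_dpa1, x_dpa2, x_apb1, x_apb2, x_bpb1, x_bpb2, x_cpb1, x_cpb2, x_dpb1, x_dpb2, x_apc1, x_apc2, x_bpc1, x_bpc2, x_cpc1, x_cpc2, x_dpc1, x_dpc2, x_apd1, x_apd2, x_bpd1, x_bpd2, x_cpd1, x_cpd2, x_dpd1,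 x_dpd2, mul_assoc, mul_add, add_mul, smul_add, smul_mul_assoc, mul_smul_comm, smul_smul, mul_zero, zero_mul, smul_zero, add_zero, zero_add, mul_one, one_mul]; all_goals (match_scalars <;> ((try ring_nf); (try simp only [inv_pow]); (try field_simp); (try simp only [div_eq_mul_inv, mul_inv_rev]); (try ring_nf); (try simp only [inv_pow]); (try field_simp); (try simp only [div_eq_mul_inv, mul_inv_rev]); (try ring_nf); (try simp only [inv_pow]); (try field_simp); (try ring1)))
  have P2 : Δ'' * A2 = A2 * Δ'' := by
    rw [hΔ'', hA2]; simp only [r_ab1, r_ab2, r_ac1, r_ac2, r_db1, r_db2, r_dc1, r_dc2, r_bc1, r_bc2, r_ad1, r_ad2, r_bb1, r_bb2, r_cc1, r_cc2, r_ab'1, r_ab'2, r_ac'1, r_ac'2, r_db'1, r_db'2, r_dc'1, r_dc'2, r_bc'1, r_bc'2, r_ad'1, r_ad'2, r_bb'1, r_bb'2, r_cc'1, r_cc'2, x_apa1, x_apa2, x_bpa1, x_bpa2, x_cpa1, x_cpa2, x_dpa1, x_dpa2, x_apb1, x_apb2, x_bpb1, x_bpb2, x_cpb1, x_cpb2, x_dpb1,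 x_dpb2, x_apc1, x_apc2, x_bpc1, x_bpc2, x_cpc1, x_cpc2, x_dpc1, x_dpc2, x_apd1, x_apd2, x_bpd1, x_bpd2, x_cpd1, x_cpd2, x_dpd1, x_dpd2, mul_assoc, mul_add, add_mul, smul_add, smul_mul_assoc, mul_smul_comm, smul_smul, mul_zero, zero_mul, smul_zero, add_zero, zero_add, mul_one, one_mul]; all_goals (match_scalars <;> ((try ring_nf); (try simp only [inv_pow]); (try field_simp); (try simp only [div_eq_mul_inv, mul_inv_rev]); (try ring_nf); (try simp only [inv_pow]); (try field_simp); (try simp only [div_eq_mul_inv, mul_inv_rev]); (try ring_nf); (try simp only [inv_pow]); (try field_simp); (try ring1)))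
  have P1 : A2 * A2 * (Δ * Δ') = Δ'' * (a * a * (a' * a')) := by
    rw [hΔ, hΔ', hΔ'', hA2]; simp only [r_ab1, r_ab2, r_ac1, r_ac2, r_db1, r_db2, r_dc1, r_dc2, r_bc1, r_bc2, r_ad1, r_ad2, r_bb1, r_bb2, r_cc1, r_cc2, r_ab'1, r_ab'2, r_ac'1, r_ac'2, r_db'1, r_db'2, r_dc'1, r_dc'2, r_bc'1, r_bc'2, r_ad'1, r_ad'2, r_bb'1, r_bb'2, r_cc'1, r_cc'2, x_apa1, x_apa2, x_bpa1, x_bpa2, x_cpa1, x_cpa2, x_dpa1, x_dpa2, x_apb1, x_apb2, x_bpb1, x_bpb2, x_cpb1, x_cpb2, x_dpb1, x_dpb2, x_apc1, x_apc2, x_bpc1, x_bpc2, x_cpc1, x_cpc2, x_dpc1, x_dpc2, x_apd1, x_apd2, x_bpd1, x_bpd2, x_cpd1, x_cpd2, x_dpd1, x_dpd2, mul_assoc, mul_add, add_mul, smul_add, smul_mul_assoc, mul_smul_comm, smul_smul, mul_zero, zero_mul, smul_zero, add_zero, zero_add, mul_one, one_mul]; all_goals (match_scalars <;> ((try ring_nf);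 (try simp only [inv_pow]); (try field_simp); (try simp only [div_eq_mul_inv, mul_inv_rev]); (try ring_nf); (try simp only [inv_pow]); (try field_simp); (try simp only [div_eq_mul_inv, mul_inv_rev]); (try ring_nf); (try simp only [inv_pow]); (try field_simp); (try ring1)))
  have ea' : e * a' = a' * e := L Δ e a' he heL C1
  have eΔ' : e * Δ' = Δ' * e := L Δ e Δ' he heL C2
  have e'e : e' * e = e * e' := L Δ' e' e he' heL' eΔ'.symm
  have eA2 : e'' * A2 = A2 * e'' := L Δ'' e'' A2 he'' heL'' P2
  have hDD : (Δ * Δ') * (e' * e) = 1 := by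
    rw [show (Δ * Δ') * (e' * e) = Δ * (Δ' * e') * e by noncomm_ring, he', mul_one, he]
  have S2 : A2 * A2 = Δ'' * (a * a * (a' * a' * (e * e'))) := by
    calc A2 * A2 = A2 * A2 * ((Δ * Δ') * (e' * e)) := by rw [hDD, mul_one]
    _ = (A2 * A2 * (Δ * Δ')) * (e' * e) := by noncomm_ring
    _ = Δ'' * (a * a * (a' * a')) * (e' * e) := by rw [P1]
    _ = Δ'' * (a * a * (a' * a' * (e * e'))) := by rw [← e'e]; noncomm_ring
  have swap2 : e * (a' * (a' * e')) = a' * (a' * (e * e')) := by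
    rw [← mul_assoc, ea', mul_assoc, ← mul_assoc e, ea', mul_assoc]
  have key : A2 * A2 * e'' = e'' * (A2 * A2) := by
    rw [mul_assoc, ← eA2, ← mul_assoc, ← eA2, mul_assoc]
  calc A2 * A2 * e'' = e'' * (A2 * A2) := key
  _ = e'' * Δ'' * (a * a * (a' * a' * (e * e'))) := by rw [S2, ← mul_assoc]
  _ = a * a * (a' * a' * (e * e')) := by rw [heL'', one_mul]
  _ = a * a * (e * (a' * (a' * e'))) := by rw [mul_assoc a', swap2]
  _ = (a * a * e) * (a' * a' * e') := by noncomm_ring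
end
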